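/- Let α₋, α₊ : U → ℝ_{>0} be smooth functions on an open set U ⊆ ℝ² satisfying the Toda system (⋆). Then the functions α̂₋ := (α₋ α₊)^{−1/4} α₋ and α̂₊ := (α₋ α₊)^{−1/4} α₊ satisfy the affine 2D Toda lattice equations for 𝔰𝔭(2): Δ₀ log(α̂₋²) = −4(2 α̂₋² − (α̂₋ α̂₊)^{−1}) and Δ₀ log(α̂₊²) = −4(2 α̂₊² − (α̂₋ α̂₊)^{−1}). -/

import Mathlib

noncomputable section

/-- The flat Laplacian `Δ₀ f = ∂²f/∂x² + ∂²f/∂y²` on (an open subset of) `ℝ²`. -/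
def flatLaplacian (f : ℝ × ℝ → ℝ) (p : ℝ × ℝ) : ℝ :=
  iteratedDeriv 2 (fun t => f (t, p.2)) p.1 + iteratedDeriv 2 (fun t => f (p.1, t)) p.2

/-- The Toda system (⋆): `Δ₀ log(α₋²) = −4(3α₋² + α₊² − 2)γ²` and
`Δ₀ log(α₊²) = −4(3α₊² + α₋² − 2)γ²`, where `γ² = (α₋α₊)^{−1/2}`, on `U`. -/
def TodaSystem (U : Set (ℝ × ℝ)) (αm αp : ℝ × ℝ → ℝ) : Prop :=
  ∀ p ∈ U,
    flatLaplacian (fun q => Real.log (αm q ^ 2)) p =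
      -4 * (3 * αm p ^ 2 + αp p ^ 2 - 2) * (αm p * αp p) ^ (-(1 / 2) : ℝ) ∧
    flatLaplacian (fun q => Real.log (αp q ^ 2)) p =
      -4 * (3 * αp p ^ 2 + αm p ^ 2 - 2) * (αm p * αp p) ^ (-(1 / 2) : ℝ)

/-- The rescaled angle function `α̂₋ = γ α₋ = (α₋α₊)^{−1/4} α₋`. -/
def hatM (αm αp : ℝ × ℝ → ℝ) (q : ℝ × ℝ) : ℝ :=
  (αm q * αp q) ^ (-(1 / 4) : ℝ) * αm q

/-- The rescaled angle function `α̂₊ = γ α₊ = (α₋α₊)^{−1/4} α₊`. -/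
def hatP (αm αp : ℝ × ℝ → ℝ) (q : ℝ × ℝ) : ℝ :=
  (αm q * αp q) ^ (-(1 / 4) : ℝ) * αp q

lemma iteratedDeriv2_congr {f g : ℝ → ℝ} {x : ℝ} (h : f =ᶠ[nhds x] g) :
    iteratedDeriv 2 f x = iteratedDeriv 2 g x := by
  have := h.deriv.deriv
  simp only [iteratedDeriv_succ, iteratedDeriv_zero]
  exact this.eq_of_nhds

lemma iteratedDeriv2_comb {f g : ℝ → ℝ} {s : Set ℝ} (hs : IsOpen s) {x : ℝ} (hx : x ∈ s)
    (hf : ContDiffOn ℝ (⊤ : ℕ∞) f s) (hg : ContDiffOn ℝ (⊤ : ℕ∞) g s) (a b : ℝ) :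
    iteratedDeriv 2 (fun t => a * f t + b * g t) x =
      a * iteratedDeriv 2 f x + b * iteratedDeriv 2 g x := by
  have hf1 : ∀ y ∈ s, DifferentiableAt ℝ f y := fun y hy =>
    (hf.contDiffAt (hs.mem_nhds hy)).differentiableAt (by simp)
  have hg1 : ∀ y ∈ s, DifferentiableAt ℝ g y := fun y hy =>
    (hg.contDiffAt (hs.mem_nhds hy)).differentiableAt (by simp)
  have hfd : DifferentiableAt ℝ (deriv f) x :=
    ((hf.deriv_of_isOpen (m := (⊤ : ℕ∞)) hs (by simp)).contDiffAt (hs.mem_nhds hx)).differentiableAt (by simp)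
  have hgd : DifferentiableAt ℝ (deriv g) x :=
    ((hg.deriv_of_isOpen (m := (⊤ : ℕ∞)) hs (by simp)).contDiffAt (hs.mem_nhds hx)).differentiableAt (by simp)
  have hd : ∀ y ∈ s, deriv (fun t => a * f t + b * g t) y = a * deriv f y + b * deriv g y := by
    intro y hy
    rw [deriv_fun_add ((hf1 y hy).const_mul a) ((hg1 y hy).const_mul b),
      deriv_const_mul a (hf1 y hy), deriv_const_mul b (hg1 y hy)]
  have hev : deriv (fun t => a * f t + b * g t) =ᶠ[nhds x]
      (fun t => a * deriv f t + b * deriv g t) :=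
    Filter.eventuallyEq_of_mem (hs.mem_nhds hx) hd
  simp only [iteratedDeriv_succ, iteratedDeriv_zero]
  rw [hev.deriv_eq, deriv_fun_add (hfd.const_mul a) (hgd.const_mul b),
    deriv_const_mul a hfd, deriv_const_mul b hgd]

lemma flatLaplacian_comb {F G H : ℝ × ℝ → ℝ} {U : Set (ℝ × ℝ)} (hUo : IsOpen U)
    (hF : ∀ q ∈ U, ContDiffAt ℝ (⊤ : ℕ∞) F q) (hG : ∀ q ∈ U, ContDiffAt ℝ (⊤ : ℕ∞) G q)
    (a b : ℝ) (hH : ∀ q ∈ U, H q = a * F q + b * G q) {p : ℝ × ℝ} (hp : p ∈ U) :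
    flatLaplacian H p = a * flatLaplacian F p + b * flatLaplacian G p := by
  have key : ∀ (e : ℝ → ℝ × ℝ) (x : ℝ), ContDiff ℝ (⊤ : ℕ∞) e → e x = p →
      iteratedDeriv 2 (fun t => H (e t)) x =
        a * iteratedDeriv 2 (fun t => F (e t)) x + b * iteratedDeriv 2 (fun t => G (e t)) x := by
    intro e x he hex
    have hso : IsOpen (e ⁻¹' U) := hUo.preimage he.continuous
    have hxs : x ∈ e ⁻¹' U := by simp [Set.mem_preimage, hex, hp]
    have hfc : ContDiffOn ℝ (⊤ : ℕ∞) (fun t => F (e t)) (e ⁻¹' U) := fun y hy =>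
      ((hF (e y) hy).comp y he.contDiffAt).contDiffWithinAt
    have hgc : ContDiffOn ℝ (⊤ : ℕ∞) (fun t => G (e t)) (e ⁻¹' U) := fun y hy =>
      ((hG (e y) hy).comp y he.contDiffAt).contDiffWithinAt
    have hev : (fun t => H (e t)) =ᶠ[nhds x] (fun t => a * F (e t) + b * G (e t)) :=
      Filter.eventuallyEq_of_mem (hso.mem_nhds hxs) (fun y hy => hH (e y) hy)
    rw [iteratedDeriv2_congr hev, iteratedDeriv2_comb hso hxs hfc hgc]
  have h1 := key (fun t => (t, p.2)) p.1 (contDiff_id.prodMk contDiff_const) rfl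
  have h2 := key (fun t => (p.1, t)) p.2 (contDiff_const.prodMk contDiff_id) rfl
  simp only [flatLaplacian]
  rw [h1, h2]; ring

theorem toda_system_gives_affine_toda
    (U : Set (ℝ × ℝ)) (hUo : IsOpen U) (αm αp : ℝ × ℝ → ℝ)
    (hpos : ∀ p ∈ U, 0 < αm p ∧ 0 < αp p)
    (hsm : ContDiffOn ℝ (⊤ : ℕ∞) αm U ∧ ContDiffOn ℝ (⊤ : ℕ∞) αp U)
    (htoda : TodaSystem U αm αp) :
    ∀ p ∈ U,
      flatLaplacian (fun q => Real.log (hatM αm αp q ^ 2)) p =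
        -4 * (2 * hatM αm αp p ^ 2 - (hatM αm αp p * hatP αm αp p)⁻¹) ∧
      flatLaplacian (fun q => Real.log (hatP αm αp q ^ 2)) p =
        -4 * (2 * hatP αm αp p ^ 2 - (hatM αm αp p * hatP αm αp p)⁻¹) := by
  obtain ⟨hm, hpc⟩ := hsm
  intro p hp
  obtain ⟨ha, hb⟩ := hpos p hp
  have hFm : ∀ q ∈ U, ContDiffAt ℝ (⊤ : ℕ∞) (fun q => Real.log (αm q ^ 2)) q := by
    intro q hq
    exact (Real.contDiffAt_log.mpr (pow_ne_zero 2 (hpos q hq).1.ne')).comp q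
      ((hm.contDiffAt (hUo.mem_nhds hq)).pow 2)
  have hFp : ∀ q ∈ U, ContDiffAt ℝ (⊤ : ℕ∞) (fun q => Real.log (αp q ^ 2)) q := by
    intro q hq
    exact (Real.contDiffAt_log.mpr (pow_ne_zero 2 (hpos q hq).2.ne')).comp q
      ((hpc.contDiffAt (hUo.mem_nhds hq)).pow 2)
  -- pointwise identities on U
  have hrp : ∀ q ∈ U, ((αm q * αp q) ^ (-(1 / 4) : ℝ)) ^ 2 =
      (αm q * αp q) ^ (-(1 / 2) : ℝ) := by
    intro q hq
    have hxq : 0 < αm q * αp q := mul_pos (hpos q hq).1 (hpos q hq).2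
    rw [pow_two, ← Real.rpow_add hxq]
    norm_num
  have hlogM : ∀ q ∈ U, Real.log (hatM αm αp q ^ 2) =
      3 / 4 * Real.log (αm q ^ 2) + -(1 / 4) * Real.log (αp q ^ 2) := by
    intro q hq
    obtain ⟨haq, hbq⟩ := hpos q hq
    have hxq : 0 < αm q * αp q := mul_pos haq hbq
    rw [hatM, mul_pow, hrp q hq,
      Real.log_mul (by positivity) (pow_ne_zero 2 haq.ne'),
      Real.log_rpow hxq, Real.log_mul haq.ne' hbq.ne',
      Real.log_pow, Real.log_pow]
    push_cast; ring
  have hlogP : ∀ q ∈ U, Real.log (hatP αm αp q ^ 2) =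
      -(1 / 4) * Real.log (αm q ^ 2) + 3 / 4 * Real.log (αp q ^ 2) := by
    intro q hq
    obtain ⟨haq, hbq⟩ := hpos q hq
    have hxq : 0 < αm q * αp q := mul_pos haq hbq
    rw [hatP, mul_pow, hrp q hq,
      Real.log_mul (by positivity) (pow_ne_zero 2 hbq.ne'),
      Real.log_rpow hxq, Real.log_mul haq.ne' hbq.ne',
      Real.log_pow, Real.log_pow]
    push_cast; ring
  have e1 := flatLaplacian_comb hUo hFm hFp (3 / 4) (-(1 / 4)) hlogM hp
  have e2 := flatLaplacian_comb hUo hFm hFp (-(1 / 4)) (3 / 4) hlogP hp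
  obtain ⟨t1, t2⟩ := htoda p hp
  have hx : 0 < αm p * αp p := mul_pos ha hb
  have hM2 : hatM αm αp p ^ 2 = (αm p * αp p) ^ (-(1 / 2) : ℝ) * αm p ^ 2 := by
    rw [hatM, mul_pow, hrp p hp]
  have hP2 : hatP αm αp p ^ 2 = (αm p * αp p) ^ (-(1 / 2) : ℝ) * αp p ^ 2 := by
    rw [hatP, mul_pow, hrp p hp]
  have hMP : (hatM αm αp p * hatP αm αp p)⁻¹ = (αm p * αp p) ^ (-(1 / 2) : ℝ) := by
    rw [hatM, hatP, mul_mul_mul_comm, ← Real.rpow_add hx, ← Real.rpow_add_one hx.ne',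
      ← Real.rpow_neg hx.le]
    norm_num
  refine ⟨?_, ?_⟩
  · rw [e1, t1, t2, hM2, hMP]; ring
  · rw [e2, t1, t2, hP2, hMP]; ring
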